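/- Let (U, g̃) be a Riemannian manifold, X a vector field on U, X* = g̃(X, ·) the dual 1-form, d the de Rham differential on forms and d* its formal adjoint. Set d_X = d + ε(X*) (exterior multiplication by X*), d_X* = d* + ι(X) (contraction by X), and D_X = d_X + d_X*. Then D_X² = (d + d*)² + (L_X + L_X*) + ⟨X, X⟩_{g̃}, where L_X is the Lie derivative along X, L_X* its formal adjoint, and ⟨X, X⟩_{g̃} acts as a multiplication operator. -/
import Mathlib


/-!
# Statement 1: The square of the Witten-perturbed de Rham operator

On a Riemannian manifold `(U, g̃)` with a vector field `X`, setting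
`d_X = d + ε(X*)`, `d_X* = d* + ι(X)` and `D_X = d_X + d_X*`, one has
`D_X² = (d + d*)² + (L_X + L_X*) + ⟨X, X⟩_{g̃}`.

Mathlib has no theory of the de Rham differential, its formal adjoint, or the Lie
derivative on `L²`-forms of a Riemannian manifold, so we state the identity for
abstract operators on the space `Ω` of differential forms, subject to the standard
relations these geometric operators satisfy: nilpotency of exterior multiplication
`ε(X*)` and of contraction `ι(X)`, the Cartan homotopy formula `d ι_X + ι_X d = L_X`
and its formal adjoint, the Clifford-type relation
`ε(X*) ι(X) + ι(X) ε(X*) = ⟨X, X⟩_{g̃}` (multiplication by the function `⟨X, X⟩`),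
and the anticommutation of `d` with `ε(X*)` resp. of `d*` with `ι(X)`.
-/

/-- **Square of the perturbed de Rham operator** (Lemma on the Witten deformation):
`D_X² = (d + d*)² + (L_X + L_X*) + ⟨X, X⟩` where `D_X = d + ε(X*) + d* + ι(X)`. -/
theorem perturbed_deRham_operator_square
    {Ω : Type*} [AddCommGroup Ω] [Module ℝ Ω]
    -- the de Rham differential `d` and its formal adjoint `d*`
    (d dstar : Module.End ℝ Ω)
    -- exterior multiplication `ε(X*)` by the 1-form `X* = g̃(X, ·)`
    (epsX : Module.End ℝ Ω)
    -- contraction `ι(X)` by the vector field `X`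
    (iotaX : Module.End ℝ Ω)
    -- the Lie derivative `L_X` and its formal adjoint `L_X*`
    (lieX lieXstar : Module.End ℝ Ω)
    -- the multiplication operator by the function `⟨X, X⟩_{g̃}`
    (normXsq : Module.End ℝ Ω)
    (heps : epsX * epsX = 0)
    (hiota : iotaX * iotaX = 0)
    -- Cartan homotopy formula `d ι_X + ι_X d = L_X`
    (hCartan : d * iotaX + iotaX * d = lieX)
    -- its formal adjoint `d* ε(X*) + ε(X*) d* = L_X*`
    (hCartanStar : dstar * epsX + epsX * dstar = lieXstar)
    -- `ε(X*) ι(X) + ι(X) ε(X*)` is multiplication by `⟨X, X⟩_{g̃}`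
    (hCliff : epsX * iotaX + iotaX * epsX = normXsq)
    (hde : d * epsX + epsX * d = 0)
    (hdi : dstar * iotaX + iotaX * dstar = 0) :
    (d + epsX + (dstar + iotaX)) ^ 2
      = (d + dstar) ^ 2 + (lieX + lieXstar) + normXsq := by
  subst hCartan hCartanStar hCliff
  simp only [sq, mul_add, add_mul]
  have h := hde; have h' := hdi
  rw [add_eq_zero_iff_eq_neg] at h h'
  rw [h, h']
  abel_nf
  rw [heps, hiota]
  abel
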